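/- Let H be a finite-dimensional Hopf algebra over a field k and A|B an H-Galois extension. Define the Miyashita-Ulbrich action of H on R = C_A(B) by r ◁ h = t^1 r t^2 where β(t^1 ⊗ t^2) = 1 ⊗ h. Then this is a well-defined right H-module action on R, R is an H-subcomodule of A, and the pre-braided commutativity r' r = r_{(0)} (r' ◁ r_{(1)}) holds for all r, r' ∈ R. -/

import Mathlib

open TensorProduct

noncomputable section

namespace D2

variable (A : Type*) [Ring A] (B : Subring A)

/-- The defining relations of `A ⊗_B A` as a quotient of `A ⊗_ℤ A`. -/
def relSub : Submodule ℤ (A ⊗[ℤ] A) :=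
  Submodule.span ℤ {x | ∃ (a c : A) (b : B), x = (a * (b : A)) ⊗ₜ[ℤ] c - a ⊗ₜ[ℤ] ((b : A) * c)}

/-- The tensor square `A ⊗_B A` of a ring extension `B ⊆ A`. -/
abbrev TensorSq := (A ⊗[ℤ] A) ⧸ relSub A B

/-- The class of a simple tensor `a ⊗_B c`. -/
def tmulB (a c : A) : TensorSq A B := Submodule.Quotient.mk (a ⊗ₜ[ℤ] c)

/-- Left multiplication `a₀ • (x ⊗ y) = (a₀ x) ⊗ y` on `A ⊗_B A`. -/
def lmul (a : A) : TensorSq A B →ₗ[ℤ] TensorSq A B :=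
  Submodule.mapQ _ _ (TensorProduct.map (LinearMap.mulLeft ℤ a) LinearMap.id) (by
    rw [relSub, Submodule.span_le]
    rintro x ⟨a', c, b, rfl⟩
    simp only [SetLike.mem_coe, Submodule.mem_comap, map_sub, TensorProduct.map_tmul,
      LinearMap.mulLeft_apply, LinearMap.id_apply]
    refine Submodule.subset_span ⟨a * a', c, b, ?_⟩
    erw [map_sub, TensorProduct.map_tmul, TensorProduct.map_tmul]
    simp only [LinearMap.mulLeft_apply, LinearMap.id_apply, mul_assoc])

/-- Right multiplication `(x ⊗ y) • a₀ = x ⊗ (y a₀)` on `A ⊗_B A`. -/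
def rmul (a : A) : TensorSq A B →ₗ[ℤ] TensorSq A B :=
  Submodule.mapQ _ _ (TensorProduct.map LinearMap.id (LinearMap.mulRight ℤ a)) (by
    rw [relSub, Submodule.span_le]
    rintro x ⟨a', c, b, rfl⟩
    simp only [SetLike.mem_coe, Submodule.mem_comap, map_sub, TensorProduct.map_tmul,
      LinearMap.mulRight_apply, LinearMap.id_apply]
    refine Submodule.subset_span ⟨a', c * a, b, ?_⟩
    erw [map_sub, TensorProduct.map_tmul, TensorProduct.map_tmul]
    simp only [LinearMap.mulRight_apply, LinearMap.id_apply, mul_assoc])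

/-- The multiplication map `A ⊗_B A → A`, `x ⊗ y ↦ x y`. -/
def mulQ : TensorSq A B →ₗ[ℤ] A :=
  Submodule.liftQ _ (LinearMap.mul' ℤ A) (by
    rw [relSub, Submodule.span_le]
    rintro x ⟨a, c, b, rfl⟩
    simp [LinearMap.mem_ker, mul_assoc]
    erw [LinearMap.mem_ker, map_sub, LinearMap.mul'_apply, LinearMap.mul'_apply]
    simp [mul_assoc])

/-- An element `t` of `A ⊗_B A` is `B`-central when `b t = t b` for all `b ∈ B`. -/
def IsBCentral (t : TensorSq A B) : Prop := ∀ b ∈ B, lmul A B b t = rmul A B b t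

/-- An element `t` of `A ⊗_B A` is `A`-central (a Casimir element) when `a t = t a`. -/
def IsACentral (t : TensorSq A B) : Prop := ∀ a : A, lmul A B a t = rmul A B a t

/-- A `B`-`B`-bimodule endomorphism of `A`. -/
def IsBB (α : A →ₗ[ℤ] A) : Prop :=
  ∀ b ∈ B, ∀ a : A, α ((b : A) * a) = b * α a ∧ α (a * b) = α a * b

/-- A right `B`-module endomorphism of `A`. -/
def IsRightB (f : A →ₗ[ℤ] A) : Prop := ∀ a : A, ∀ b ∈ B, f (a * b) = f a * b

/-- `x ↦ (x·) ⊗ id` as a linear map, used to build Sweedler-type expressions. -/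
def lmulTen : A →ₗ[ℤ] (A ⊗[ℤ] A) →ₗ[ℤ] (A ⊗[ℤ] A) where
  toFun a := TensorProduct.map (LinearMap.mulLeft ℤ a) LinearMap.id
  map_add' a a' := by
    apply TensorProduct.ext'
    intro x y
    simp [add_mul, TensorProduct.add_tmul]
    erw [LinearMap.add_apply, TensorProduct.map_tmul, TensorProduct.map_tmul]
    rfl
  map_smul' z a := by
    apply TensorProduct.ext'
    intro x y
    simp only [TensorProduct.map_tmul, LinearMap.mulLeft_apply, LinearMap.id_apply,
      LinearMap.smul_apply, RingHom.id_apply, smul_mul_assoc, TensorProduct.smul_tmul']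
    erw [LinearMap.smul_apply, TensorProduct.map_tmul]
    rw [TensorProduct.smul_tmul']
    rfl

/-- For `ζ = Σ u ⊗ v`, the map `a ↦ Σ α(a u) v`, i.e. `α(? ζ¹) ζ²`. -/
def sweed (α : A →ₗ[ℤ] A) (ζ : A ⊗[ℤ] A) : A →ₗ[ℤ] A :=
  ((LinearMap.mul' ℤ A).comp (TensorProduct.map α LinearMap.id)).comp ((lmulTen A).flip ζ)

/-- For `ζ = Σ u ⊗ v`, the element `Σ u r v` ("sandwich" evaluation `ζ¹ r ζ²`). -/
def sandw (r : A) (ζ : A ⊗[ℤ] A) : A :=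
  (LinearMap.mul' ℤ A) ((TensorProduct.map (LinearMap.mulRight ℤ r) LinearMap.id) ζ)

/-- `mul₂ ζ ξ = Σ (u x) ⊗ (y v)` for `ζ = Σ u ⊗ v`, `ξ = Σ x ⊗ y`:
the product `ξ ·_T ζ` of two elements of `T = (A ⊗_B A)^B` on representatives. -/
def mul₂ : (A ⊗[ℤ] A) →ₗ[ℤ] (A ⊗[ℤ] A) →ₗ[ℤ] (A ⊗[ℤ] A) :=
  TensorProduct.lift <| LinearMap.mk₂ ℤ
    (fun u v => TensorProduct.map (LinearMap.mulLeft ℤ u) (LinearMap.mulRight ℤ v))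
    (fun u u' v => by
      apply TensorProduct.ext'
      intro x y
      simp [add_mul, TensorProduct.add_tmul]
      erw [LinearMap.add_apply, TensorProduct.map_tmul, TensorProduct.map_tmul]
      rfl)
    (fun z u v => by
      apply TensorProduct.ext'
      intro x y
      simp only [TensorProduct.map_tmul, LinearMap.mulLeft_apply, LinearMap.mulRight_apply,
        LinearMap.smul_apply, smul_mul_assoc, TensorProduct.smul_tmul']
      erw [LinearMap.smul_apply, TensorProduct.map_tmul]
      rw [TensorProduct.smul_tmul']
      rfl)
    (fun u v v' => by
      apply TensorProduct.ext'
      intro x y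
      simp [mul_add, TensorProduct.tmul_add]
      erw [LinearMap.add_apply, TensorProduct.map_tmul, TensorProduct.map_tmul]
      rfl)
    (fun z u v => by
      apply TensorProduct.ext'
      intro x y
      simp only [TensorProduct.map_tmul, LinearMap.mulLeft_apply, LinearMap.mulRight_apply,
        LinearMap.smul_apply, mul_smul_comm, TensorProduct.tmul_smul]
      erw [LinearMap.smul_apply, TensorProduct.map_tmul]
      rw [TensorProduct.smul_tmul']
      rfl)

/-- `A` is balanced as a right `B`-module. -/
def RightBalanced : Prop :=
  ∀ φ : A →+ A,
    (∀ f : A →+ A, (∀ a : A, ∀ b ∈ B, f (a * b) = f a * b) → ∀ a, φ (f a) = f (φ a)) →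
    ∃ b ∈ B, ∀ a, φ a = a * b

end D2

end


open TensorProduct

noncomputable section

/-- The action of a functional `p ∈ H*` on a right `H`-comodule algebra `A`:
`p · a = a₍₀₎ p(a₍₁₎)`. -/
def pact {k A H : Type*} [CommRing k] [Ring A] [Algebra k A] [Ring H] [Algebra k H]
    (ρ : A →ₐ[k] A ⊗[k] H) (p : H →ₗ[k] k) (a : A) : A :=
  (TensorProduct.rid k A) ((LinearMap.lTensor A p) (ρ a))

/-- The centralizer of `B` in `A` as a `k`-submodule of `A`. -/
def centralizerSubmodule (k : Type*) {A : Type*} [CommRing k] [Ring A] [Algebra k A]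
    (B : Subring A) : Submodule k A where
  carrier := Subring.centralizer (B : Set A)
  add_mem' := add_mem
  zero_mem' := zero_mem _
  smul_mem' := by
    intro c x hx
    rw [SetLike.mem_coe, Subring.mem_centralizer_iff] at hx ⊢
    intro g hg
    rw [mul_smul_comm, smul_mul_assoc, hx g hg]


namespace Stmt16Aux

open D2

variable {k : Type*} [Field k] {H : Type*} [Ring H] [Algebra k H]
  {A : Type*} [Ring A] [Algebra k A]

section Sandw

variable (B : Subring A)

/-- `t ↦ ζ¹ r ζ²` as a linear map. -/
def sandwL (r : A) : A ⊗[ℤ] A →ₗ[ℤ] A :=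
  (LinearMap.mul' ℤ A).comp (TensorProduct.map (LinearMap.mulRight ℤ r) LinearMap.id)

@[simp] lemma sandwL_tmul (r x y : A) : sandwL r (x ⊗ₜ[ℤ] y) = x * r * y := by
  show LinearMap.mul' ℤ A ((TensorProduct.map (LinearMap.mulRight ℤ r) LinearMap.id) (x ⊗ₜ[ℤ] y)) = _
  rw [TensorProduct.map_tmul, LinearMap.mul'_apply]
  rfl

lemma sandwL_eq_sandw (r : A) (t : A ⊗[ℤ] A) : sandwL r t = D2.sandw A r t := rfl

/-- The sandwich map descends to `A ⊗_B A` when `r` centralizes `B`. -/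
def sandwQ (r : A) (hr : r ∈ Subring.centralizer (B : Set A)) :
    TensorSq A B →ₗ[ℤ] A :=
  Submodule.liftQ _ (sandwL r) (by
    rw [relSub, Submodule.span_le]
    rintro x ⟨a, c, b, rfl⟩
    rw [Subring.mem_centralizer_iff] at hr
    have hb : (b : A) * r = r * (b : A) := hr (b : A) b.2
    simp only [SetLike.mem_coe, LinearMap.mem_ker, map_sub, sandwL_tmul]
    rw [mul_assoc a (b : A) r, hb, ← mul_assoc a r (b : A), mul_assoc (a * r) (b : A) c,
      sub_self])

@[simp] lemma sandwQ_mk (r : A) (hr : r ∈ Subring.centralizer (B : Set A)) (x y : A) :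
    sandwQ B r hr (Submodule.Quotient.mk (x ⊗ₜ[ℤ] y)) = x * r * y := by
  simp [sandwQ]

lemma sandwQ_mkt (r : A) (hr : r ∈ Subring.centralizer (B : Set A)) (t : A ⊗[ℤ] A) :
    sandwQ B r hr (Submodule.Quotient.mk t) = sandwL r t :=
  Submodule.liftQ_apply _ _ _

lemma sandwQ_lmul (r : A) (hr : r ∈ Subring.centralizer (B : Set A)) (a : A)
    (τ : TensorSq A B) : sandwQ B r hr (lmul A B a τ) = a * sandwQ B r hr τ := by
  obtain ⟨t, rfl⟩ := Submodule.Quotient.mk_surjective _ τ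
  rw [show lmul A B a (Submodule.Quotient.mk t) = Submodule.Quotient.mk (TensorProduct.map (LinearMap.mulLeft ℤ a) LinearMap.id t) from rfl]
  induction t with
  | zero => simp
  | tmul x y => simp [mul_assoc]
  | add s t hs ht =>
    simp only [Submodule.Quotient.mk_add, map_add, mul_add, hs, ht]

lemma sandwQ_rmul (r : A) (hr : r ∈ Subring.centralizer (B : Set A)) (a : A)
    (τ : TensorSq A B) : sandwQ B r hr (rmul A B a τ) = sandwQ B r hr τ * a := by
  obtain ⟨t, rfl⟩ := Submodule.Quotient.mk_surjective _ τ
  rw [show rmul A B a (Submodule.Quotient.mk t) = Submodule.Quotient.mk (TensorProduct.map LinearMap.id (LinearMap.mulRight ℤ a) t) from rfl]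
  induction t with
  | zero => simp
  | tmul x y => simp [mul_assoc]
  | add s t hs ht =>
    simp only [Submodule.Quotient.mk_add, map_add, add_mul, hs, ht]

lemma sandwL_add_r (r r' : A) (t : A ⊗[ℤ] A) :
    sandwL (r + r') t = sandwL r t + sandwL r' t := by
  induction t with
  | zero => simp
  | tmul x y => simp [mul_add, add_mul]
  | add s t hs ht =>
    simp only [map_add, hs, ht]
    abel

lemma sandwL_sandwL_add {w w' : A} {u v : A} :
    sandwL (w + w') (u ⊗ₜ[ℤ] v) = sandwL w (u ⊗ₜ[ℤ] v) + sandwL w' (u ⊗ₜ[ℤ] v) := by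
  simp [mul_add, add_mul]

lemma sandwL_mul₂ (r : A) (t' t : A ⊗[ℤ] A) :
    sandwL r (D2.mul₂ A t' t) = sandwL (sandwL r t) t' := by
  induction t' with
  | zero => simp
  | tmul u v =>
    induction t with
    | zero => simp [D2.mul₂]
    | tmul x y =>
      have : D2.mul₂ A (u ⊗ₜ[ℤ] v) (x ⊗ₜ[ℤ] y) = (u * x) ⊗ₜ[ℤ] (y * v) := rfl
      rw [this, sandwL_tmul, sandwL_tmul, sandwL_tmul]
      simp only [mul_assoc]
    | add s t hs ht =>
      simp only [map_add, LinearMap.add_apply, hs, ht]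
      rw [sandwL_sandwL_add]
  | add s t hs ht => simp only [map_add, LinearMap.add_apply, hs, ht]

end Sandw

section Beta

variable (B : Subring A) (ρ : A →ₐ[k] A ⊗[k] H)

lemma map_mulLeft_eq (x : A) (z : A ⊗[k] H) :
    (TensorProduct.map (LinearMap.mulLeft k x) LinearMap.id) z = (x ⊗ₜ[k] (1 : H)) * z := by
  induction z with
  | zero => simp
  | tmul a h => simp [Algebra.TensorProduct.tmul_mul_tmul]
  | add s t hs ht => simp only [map_add, mul_add, hs, ht]

/-- `Mside ρ t' z = Σ (u ⊗ 1) * z * ρ v` for `t' = Σ u ⊗ v`. -/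
def Mside : (A ⊗[ℤ] A) →ₗ[ℤ] (A ⊗[k] H) →ₗ[ℤ] (A ⊗[k] H) :=
  TensorProduct.lift <| LinearMap.mk₂ ℤ
    (fun u v =>
      { toFun := fun z => (u ⊗ₜ[k] (1 : H)) * z * ρ v
        map_add' := fun z z' => by
          show (u ⊗ₜ[k] (1 : H)) * (z + z') * ρ v = _
          rw [mul_add, add_mul]
        map_smul' := fun n z => by
          show (u ⊗ₜ[k] (1 : H)) * (n • z) * ρ v = _
          rw [mul_smul_comm, smul_mul_assoc]
          rfl })
    (fun u u' v => by
      ext z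
      show ((u + u') ⊗ₜ[k] (1 : H)) * z * ρ v = _
      rw [TensorProduct.add_tmul, add_mul, add_mul]
      rfl)
    (fun n u v => by
      ext z
      show ((n • u) ⊗ₜ[k] (1 : H)) * z * ρ v = _
      have h1 : ((n • u) ⊗ₜ[k] (1 : H)) = n • (u ⊗ₜ[k] (1 : H)) :=
        map_zsmul ((TensorProduct.mk k A H).flip (1 : H)) n u
      rw [h1, smul_mul_assoc, smul_mul_assoc]
      rfl)
    (fun u v v' => by
      ext z
      show (u ⊗ₜ[k] (1 : H)) * z * ρ (v + v') = _
      rw [map_add, mul_add]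
      rfl)
    (fun n u v => by
      ext z
      show (u ⊗ₜ[k] (1 : H)) * z * ρ (n • v) = _
      rw [map_zsmul, mul_smul_comm]
      rfl)

@[simp] lemma Mside_tmul (u v : A) (z : A ⊗[k] H) :
    Mside ρ (u ⊗ₜ[ℤ] v) z = (u ⊗ₜ[k] (1 : H)) * z * ρ v := rfl

lemma tmul_mul_eq_lTensor (u : A) (h : H) (z : A ⊗[k] H) :
    (u ⊗ₜ[k] h) * z = (LinearMap.lTensor A (LinearMap.mulLeft k h))
      ((u ⊗ₜ[k] (1 : H)) * z) := by
  induction z with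
  | zero => simp
  | tmul a g => simp [Algebra.TensorProduct.tmul_mul_tmul]
  | add s t hs ht => simp only [mul_add, map_add, hs, ht]


variable (βf : D2.TensorSq A B →+ (A ⊗[k] H))
  (hβ : ∀ a a' : A, βf (D2.tmulB A B a a') =
    (TensorProduct.map (LinearMap.mulLeft k a) LinearMap.id) (ρ a'))

include hβ

lemma βf_mk (x y : A) :
    βf (Submodule.Quotient.mk (x ⊗ₜ[ℤ] y)) = (x ⊗ₜ[k] (1 : H)) * ρ y := by
  rw [show (Submodule.Quotient.mk (x ⊗ₜ[ℤ] y) : TensorSq A B) = D2.tmulB A B x y from rfl,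
    hβ, map_mulLeft_eq]

lemma βf_lmul (a : A) (τ : TensorSq A B) :
    βf (lmul A B a τ) = (a ⊗ₜ[k] (1 : H)) * βf τ := by
  obtain ⟨t, rfl⟩ := Submodule.Quotient.mk_surjective _ τ
  rw [show lmul A B a (Submodule.Quotient.mk t) = Submodule.Quotient.mk (TensorProduct.map (LinearMap.mulLeft ℤ a) LinearMap.id t) from rfl]
  induction t with
  | zero => simp
  | tmul x y =>
    simp only [TensorProduct.map_tmul, LinearMap.mulLeft_apply, LinearMap.id_apply]
    rw [βf_mk B ρ βf hβ, βf_mk B ρ βf hβ, ← mul_assoc, Algebra.TensorProduct.tmul_mul_tmul,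
      one_mul]
  | add s t hs ht =>
    simp only [map_add, Submodule.Quotient.mk_add, hs, ht, mul_add]

lemma βf_rmul (a : A) (τ : TensorSq A B) :
    βf (rmul A B a τ) = βf τ * ρ a := by
  obtain ⟨t, rfl⟩ := Submodule.Quotient.mk_surjective _ τ
  rw [show rmul A B a (Submodule.Quotient.mk t) = Submodule.Quotient.mk (TensorProduct.map LinearMap.id (LinearMap.mulRight ℤ a) t) from rfl]
  induction t with
  | zero => simp
  | tmul x y =>
    simp only [TensorProduct.map_tmul, LinearMap.mulRight_apply, LinearMap.id_apply]
    rw [βf_mk B ρ βf hβ, βf_mk B ρ βf hβ, map_mul, mul_assoc]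
  | add s t hs ht =>
    simp only [map_add, Submodule.Quotient.mk_add, hs, ht, add_mul]

lemma βf_mul₂ (t' t : A ⊗[ℤ] A) :
    βf (Submodule.Quotient.mk (D2.mul₂ A t' t)) =
      Mside ρ t' (βf (Submodule.Quotient.mk t)) := by
  induction t' with
  | zero => simp
  | tmul u v =>
    induction t with
    | zero => simp
    | tmul x y =>
      have : D2.mul₂ A (u ⊗ₜ[ℤ] v) (x ⊗ₜ[ℤ] y) = (u * x) ⊗ₜ[ℤ] (y * v) := rfl
      rw [this, βf_mk B ρ βf hβ, Mside_tmul, βf_mk B ρ βf hβ, map_mul, ← mul_assoc,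
        ← mul_assoc, Algebra.TensorProduct.tmul_mul_tmul, one_mul]
    | add s w hs hw =>
      simp only [map_add, Submodule.Quotient.mk_add, hs, hw]
  | add s w hs hw =>
    simp only [map_add, LinearMap.add_apply, Submodule.Quotient.mk_add, hs, hw]

lemma Mside_one_tmul (h : H) (t' : A ⊗[ℤ] A) :
    Mside ρ t' ((1 : A) ⊗ₜ[k] h) = (LinearMap.lTensor A (LinearMap.mulLeft k h))
      (βf (Submodule.Quotient.mk t')) := by
  induction t' with
  | zero => simp
  | tmul u v =>
    rw [Mside_tmul, βf_mk B ρ βf hβ, Algebra.TensorProduct.tmul_mul_tmul, mul_one, one_mul,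
      tmul_mul_eq_lTensor]
  | add s t hs ht =>
    simp only [map_add, LinearMap.add_apply, Submodule.Quotient.mk_add, hs, ht]

end Beta

end Stmt16Aux

/-- the Miyashita-Ulbrich action `r ◁ h = t¹ r t²` (for `β(t) = 1 ⊗ h`) is a
well-defined right `H`-module action on `R = C_A(B)`, `R` is an `H`-subcomodule of `A`,
and pre-braided commutativity `r' r = r₍₀₎ (r' ◁ r₍₁₎)` holds. -/
theorem stmt16 {k : Type*} [Field k] {H : Type*} [Ring H] [HopfAlgebra k H]
    [FiniteDimensional k H] {A : Type*} [Ring A] [Algebra k A]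
    (ρ : A →ₐ[k] A ⊗[k] H)
    (hcounit : ∀ a : A,
      (TensorProduct.rid k A) ((LinearMap.lTensor A (Coalgebra.counit (R := k) (A := H))) (ρ a)) = a)
    (hcoassoc : ∀ a : A,
      (TensorProduct.assoc k A H H) ((LinearMap.rTensor H ρ.toLinearMap) (ρ a)) =
        (LinearMap.lTensor A (Coalgebra.comul (R := k) (A := H))) (ρ a))
    (B : Subring A) (hB : ∀ a : A, a ∈ B ↔ ρ a = a ⊗ₜ[k] 1)
    (βf : D2.TensorSq A B →+ (A ⊗[k] H))
    (hβ : ∀ a a' : A, βf (D2.tmulB A B a a') =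
      (TensorProduct.map (LinearMap.mulLeft k a) LinearMap.id) (ρ a'))
    (hbij : Function.Bijective βf) :
    ∃ act : Subring.centralizer (B : Set A) → H → Subring.centralizer (B : Set A),
      -- defining formula: act r h = t¹ r t² whenever β(t) = 1 ⊗ h
      (∀ (r : Subring.centralizer (B : Set A)) (h : H) (t : A ⊗[ℤ] A),
        βf (Submodule.Quotient.mk t) = 1 ⊗ₜ[k] h → (act r h : A) = D2.sandw A (r : A) t) ∧
      -- right H-module action axioms
      (∀ r h h', act (act r h) h' = act r (h * h')) ∧
      (∀ r, act r 1 = r) ∧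
      (∀ r h h', act r (h + h') = act r h + act r h') ∧
      (∀ (r : Subring.centralizer (B : Set A)) (c : k) (h : H),
        (act r (c • h) : A) = c • (act r h : A)) ∧
      -- R is an H-subcomodule of A
      (∀ r : Subring.centralizer (B : Set A),
        ρ (r : A) ∈ LinearMap.range (LinearMap.rTensor H (centralizerSubmodule k B).subtype)) ∧
      -- pre-braided commutativity: r' r = r₍₀₎ (r' ◁ r₍₁₎)
      (∀ (r r' : Subring.centralizer (B : Set A)) (N : ℕ) (x : Fin N → A) (y : Fin N → H),
        ρ (r : A) = ∑ i, x i ⊗ₜ[k] y i →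
        (r' : A) * (r : A) = ∑ i, x i * (act r' (y i) : A)) := by

  classical
  have hinj := hbij.1
  set e := Equiv.ofBijective βf hbij with he
  set τh : H → D2.TensorSq A B := fun h => e.symm ((1 : A) ⊗ₜ[k] h) with hτdef
  have hτ : ∀ h : H, βf (τh h) = (1 : A) ⊗ₜ[k] h := fun h => e.apply_symm_apply _
  have hBc : ∀ b ∈ B, ∀ h : H, D2.lmul A B b (τh h) = D2.rmul A B b (τh h) := by
    intro b hb h
    apply hinj
    rw [Stmt16Aux.βf_lmul B ρ βf hβ, Stmt16Aux.βf_rmul B ρ βf hβ, hτ, (hB b).1 hb,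
      Algebra.TensorProduct.tmul_mul_tmul, Algebra.TensorProduct.tmul_mul_tmul,
      one_mul, mul_one, one_mul, mul_one]
  have memAct : ∀ (r : A) (hr : r ∈ Subring.centralizer (B : Set A)) (h : H),
      Stmt16Aux.sandwQ B r hr (τh h) ∈ Subring.centralizer (B : Set A) := by
    intro r hr h
    rw [Subring.mem_centralizer_iff]
    intro g hg
    rw [← Stmt16Aux.sandwQ_lmul, ← Stmt16Aux.sandwQ_rmul, hBc g hg h]
  set act : Subring.centralizer (B : Set A) → H → Subring.centralizer (B : Set A) :=
    fun r h => ⟨Stmt16Aux.sandwQ B (r : A) r.2 (τh h), memAct (r : A) r.2 h⟩ with hact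
  have actA : ∀ (r : Subring.centralizer (B : Set A)) (h : H),
      (act r h : A) = Stmt16Aux.sandwQ B (r : A) r.2 (τh h) := fun _ _ => rfl
  refine ⟨act, ?_, ?_, ?_, ?_, ?_, ?_, ?_⟩
  · -- defining formula
    intro r h t ht
    have hmk : (Submodule.Quotient.mk t : D2.TensorSq A B) = τh h := by
      apply hinj; rw [ht, hτ]
    rw [actA, ← hmk, Stmt16Aux.sandwQ_mkt, Stmt16Aux.sandwL_eq_sandw]
  · -- composition
    intro r h h'
    obtain ⟨t, ht⟩ := Submodule.Quotient.mk_surjective _ (τh h)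
    obtain ⟨t', ht'⟩ := Submodule.Quotient.mk_surjective _ (τh h')
    have hβt : βf (Submodule.Quotient.mk t) = (1 : A) ⊗ₜ[k] h := by rw [ht, hτ]
    have hmm : βf (Submodule.Quotient.mk (D2.mul₂ A t' t)) = (1 : A) ⊗ₜ[k] (h * h') := by
      rw [Stmt16Aux.βf_mul₂ B ρ βf hβ, hβt, Stmt16Aux.Mside_one_tmul B ρ βf hβ, ht', hτ,
        LinearMap.lTensor_tmul, LinearMap.mulLeft_apply]
    have hτm : τh (h * h') = Submodule.Quotient.mk (D2.mul₂ A t' t) := by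
      apply hinj; rw [hτ, hmm]
    have hL : (act (act r h) h' : A) =
        Stmt16Aux.sandwL (Stmt16Aux.sandwL (r : A) t) t' := by
      rw [actA, ← ht', Stmt16Aux.sandwQ_mkt, actA, ← ht, Stmt16Aux.sandwQ_mkt]
    have hR : (act r (h * h') : A) = Stmt16Aux.sandwL (r : A) (D2.mul₂ A t' t) := by
      rw [actA, hτm, Stmt16Aux.sandwQ_mkt]
    apply Subtype.ext
    rw [hL, hR, Stmt16Aux.sandwL_mul₂]
  · -- unit
    intro r
    have h1 : τh (1 : H) = Submodule.Quotient.mk ((1 : A) ⊗ₜ[ℤ] (1 : A)) := by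
      apply hinj
      rw [hτ, Stmt16Aux.βf_mk B ρ βf hβ, map_one, mul_one]
    apply Subtype.ext
    rw [actA, h1, Stmt16Aux.sandwQ_mk, one_mul, mul_one]
  · -- additivity
    intro r h h'
    have hadd : τh (h + h') = τh h + τh h' := by
      apply hinj
      rw [map_add, hτ, hτ, hτ, TensorProduct.tmul_add]
    apply Subtype.ext
    rw [actA, hadd, map_add]
    rfl
  · -- k-linearity
    intro r c h
    have hsm : τh (c • h) = D2.rmul A B (c • (1 : A)) (τh h) := by
      apply hinj
      rw [hτ, Stmt16Aux.βf_rmul B ρ βf hβ, hτ, map_smul, map_one, mul_smul_comm, mul_one,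
        TensorProduct.tmul_smul]
    rw [actA, hsm, Stmt16Aux.sandwQ_rmul, mul_smul_comm, mul_one, actA]
  · -- subcomodule
    intro r
    set bH := Module.finBasis k H with hbH
    set cfL : (H →ₗ[k] k) → A ⊗[k] H →ₗ[k] A :=
      fun φ => (TensorProduct.rid k A).toLinearMap ∘ₗ LinearMap.lTensor A φ with hcfL
    have cfL_tmul : ∀ (φ : H →ₗ[k] k) (a : A) (g : H), cfL φ (a ⊗ₜ[k] g) = φ g • a := by
      intro φ a g
      simp [hcfL]
    have cf_left : ∀ (φ : H →ₗ[k] k) (c : A) (x : A ⊗[k] H),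
        cfL φ ((c ⊗ₜ[k] (1 : H)) * x) = c * cfL φ x := by
      intro φ c x
      induction x with
      | zero => simp
      | tmul a g =>
        rw [Algebra.TensorProduct.tmul_mul_tmul, one_mul, cfL_tmul, cfL_tmul, mul_smul_comm]
      | add s t hs ht => rw [mul_add, map_add, map_add, hs, ht, mul_add]
    have cf_right : ∀ (φ : H →ₗ[k] k) (c : A) (x : A ⊗[k] H),
        cfL φ (x * (c ⊗ₜ[k] (1 : H))) = cfL φ x * c := by
      intro φ c x
      induction x with
      | zero => simp
      | tmul a g =>
        rw [Algebra.TensorProduct.tmul_mul_tmul, mul_one, cfL_tmul, cfL_tmul, smul_mul_assoc]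
      | add s t hs ht => rw [add_mul, map_add, map_add, hs, ht, add_mul]
    have recon : ∀ x : A ⊗[k] H, ∑ i, (cfL (bH.coord i) x) ⊗ₜ[k] bH i = x := by
      intro x
      induction x with
      | zero => simp
      | tmul a g =>
        have : ∀ i, (cfL (bH.coord i) (a ⊗ₜ[k] g)) ⊗ₜ[k] bH i
            = a ⊗ₜ[k] ((bH.repr g) i • bH i) := by
          intro i
          rw [cfL_tmul, Module.Basis.coord_apply, TensorProduct.smul_tmul]
        rw [Finset.sum_congr rfl fun i _ => this i, ← TensorProduct.tmul_sum,
          Module.Basis.sum_repr]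
      | add s t hs ht =>
        simp only [map_add, TensorProduct.add_tmul, Finset.sum_add_distrib, hs, ht]
    have hrc : ∀ g ∈ B, g * (r : A) = (r : A) * g := by
      have := r.2
      rw [Subring.mem_centralizer_iff] at this
      exact this
    have hcent : ∀ b ∈ B, (b ⊗ₜ[k] (1 : H)) * ρ (r : A) = ρ (r : A) * (b ⊗ₜ[k] (1 : H)) := by
      intro b hb
      rw [← (hB b).1 hb, ← map_mul, ← map_mul, hrc b hb]
    have memi : ∀ i, cfL (bH.coord i) (ρ (r : A)) ∈ centralizerSubmodule k B := by
      intro i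
      show _ ∈ Subring.centralizer (B : Set A)
      rw [Subring.mem_centralizer_iff]
      intro g hg
      rw [← cf_left, hcent g hg, cf_right]
    refine ⟨∑ i, (⟨cfL (bH.coord i) (ρ (r : A)), memi i⟩ : centralizerSubmodule k B)
      ⊗ₜ[k] bH i, ?_⟩
    rw [map_sum]
    simp only [LinearMap.rTensor_tmul, Submodule.coe_subtype]
    exact recon (ρ (r : A))
  · -- pre-braided commutativity
    intro r r' N x y hρr
    have key : (Submodule.Quotient.mk ((1 : A) ⊗ₜ[ℤ] (r : A)) : D2.TensorSq A B)
        = ∑ i, D2.lmul A B (x i) (τh (y i)) := by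
      apply hinj
      have hterm : ∀ i : Fin N, βf (D2.lmul A B (x i) (τh (y i))) = x i ⊗ₜ[k] y i := by
        intro i
        rw [Stmt16Aux.βf_lmul B ρ βf hβ, hτ, Algebra.TensorProduct.tmul_mul_tmul,
          mul_one, one_mul]
      rw [Stmt16Aux.βf_mk B ρ βf hβ, map_sum, Finset.sum_congr rfl fun i _ => hterm i,
        ← hρr, ← Algebra.TensorProduct.one_def, one_mul]
    have hkey := congrArg (Stmt16Aux.sandwQ B (r' : A) r'.2) key
    rw [Stmt16Aux.sandwQ_mk, one_mul, map_sum] at hkey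
    rw [hkey]
    refine Finset.sum_congr rfl fun i _ => ?_
    rw [Stmt16Aux.sandwQ_lmul, actA]

end
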